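/- Let Φ : ℂⁿ → ℝ be a strictly plurisubharmonic quadratic form. For every s ∈ ℝ, the space H^∞_Φ(ℂⁿ) = ⋂_{r ∈ ℝ} H^r_Φ(ℂⁿ) is dense in H^s_Φ(ℂⁿ) with respect to the norm ‖u‖_s = (∫_{ℂⁿ} |u(z)|² ⟨z⟩^{2s} e^{-2Φ(z)} dL(z))^{1/2}. -/

import Mathlib

open Matrix MeasureTheory ENNReal

noncomputable section

/-- The squared Euclidean norm `|z|²` on `ℂⁿ`. -/
def eSq {n : ℕ} (z : Fin n → ℂ) : ℝ := ∑ i, Complex.normSq (z i)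

/-- The Japanese bracket `⟨z⟩ = (1 + |z|²)^{1/2}`. -/
def jb {n : ℕ} (z : Fin n → ℂ) : ℝ := Real.sqrt (1 + eSq z)

/-- `Φ : ℂⁿ → ℝ` is a (real) quadratic form of the underlying real coordinates. -/
def IsRQuad {n : ℕ} (Φ : (Fin n → ℂ) → ℝ) : Prop :=
  ∃ B : (Fin n → ℂ) →ₗ[ℝ] (Fin n → ℂ) →ₗ[ℝ] ℝ, ∀ z, Φ z = B z z

/-- `Φ : ℂⁿ → ℝ` is a strictly plurisubharmonic quadratic form.  For a quadratic form `Φ`,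
the Levi form satisfies `(∂²_{z z̄}Φ) w ⋅ w̄ = (Φ(w) + Φ(i w))/2`, so positive definiteness of
the Levi matrix is equivalent to `Φ(w) + Φ(i·w) > 0` for all `w ≠ 0`. -/
def IsSPSH {n : ℕ} (Φ : (Fin n → ℂ) → ℝ) : Prop :=
  IsRQuad Φ ∧ ∀ z : Fin n → ℂ, z ≠ 0 → 0 < Φ z + Φ (Complex.I • z)

/-- The squared weighted norm `‖u‖_s² = ∫ |u(z)|² ⟨z⟩^{2s} e^{-2Φ(z)} L(dz)` (in `ℝ≥0∞`). -/
def hnorm {n : ℕ} (Φ : (Fin n → ℂ) → ℝ) (s : ℝ) (u : (Fin n → ℂ) → ℂ) : ℝ≥0∞ :=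
  ∫⁻ z : Fin n → ℂ, (‖u z‖₊ : ℝ≥0∞) ^ 2 * ENNReal.ofReal (jb z ^ (2 * s) * Real.exp (-2 * Φ z))

/-- A conic subset of `ℂⁿ`. -/
def IsConic {n : ℕ} (V : Set (Fin n → ℂ)) : Prop := ∀ z ∈ V, ∀ t : ℝ, 0 < t → t • z ∈ V

/-- The `1/2`-Gelfand–Shilov wavefront set of `u` relative to `Φ`: the complement in
`ℂⁿ∖{0}` of the points having an open conic neighborhood in `ℂⁿ∖{0}` on which
`|u(z)| ≤ C e^{Φ(z) - c|z|²}`. -/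
def wf {n : ℕ} (Φ : (Fin n → ℂ) → ℝ) (u : (Fin n → ℂ) → ℂ) : Set (Fin n → ℂ) :=
  {z₀ | z₀ ≠ 0 ∧ ¬ ∃ V : Set (Fin n → ℂ), IsOpen V ∧ IsConic V ∧ (0 : Fin n → ℂ) ∉ V ∧ z₀ ∈ V ∧
      ∃ C c : ℝ, 0 < C ∧ 0 < c ∧ ∀ z ∈ V, ‖u z‖ ≤ C * Real.exp (Φ z - c * eSq z)}

/-- A holomorphic quadratic form on `ℂ^{2n} = ℂⁿ_z × ℂⁿ_θ`. -/
def IsCQuad2 {n : ℕ} (Ψ : (Fin n → ℂ) → (Fin n → ℂ) → ℂ) : Prop :=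
  ∃ B : ((Fin n → ℂ) × (Fin n → ℂ)) →ₗ[ℂ] ((Fin n → ℂ) × (Fin n → ℂ)) →ₗ[ℂ] ℂ,
    ∀ z θ, Ψ z θ = B (z, θ) (z, θ)

/-- A real quadratic form on `ℂⁿ × ℂⁿ` viewed as a real vector space. -/
def IsRQuadPair {n : ℕ} (R : (Fin n → ℂ) → (Fin n → ℂ) → ℝ) : Prop :=
  ∃ B : ((Fin n → ℂ) × (Fin n → ℂ)) →ₗ[ℝ] ((Fin n → ℂ) × (Fin n → ℂ)) →ₗ[ℝ] ℝ,
    ∀ z w, R z w = B (z, w) (z, w)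

/-- The Bergman-form integral operator
`G u (z) = a ∫ e^{2Ψ(z, w̄)} u(w) e^{-2Φ(w)} L(dw)`. -/
def berg {n : ℕ} (a : ℂ) (Ψ : (Fin n → ℂ) → (Fin n → ℂ) → ℂ) (Φ : (Fin n → ℂ) → ℝ)
    (u : (Fin n → ℂ) → ℂ) (z : Fin n → ℂ) : ℂ :=
  a * ∫ w : Fin n → ℂ, Complex.exp (2 * Ψ z (star w)) * u w * (Real.exp (-2 * Φ w) : ℂ)

/-!
Write `Φ = Re q + H` with `q` a holomorphic quadratic form and `H = leviForm Φ` positive definite.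
Multiplication by `e^q` is an isometry from `H^s_H` onto `H^s_Φ`, so it suffices to approximate
`f ∈ H^s_H` by functions in every `H^r_H`. The dilates `f(t·)`, `0 < t < 1`, do: since
`H(tz) = t² H(z)`, the weight of `H^r_H` at `z` carries the extra Gaussian factor `e^{-2(1-t²)H(z)}`
compared with the weight of `H^s_H` at `tz`, and it absorbs every power of `⟨z⟩`. As `t → 1⁻`,
`f(t·) → f` in `H^s_H`: on a ball by dominated convergence, and off a large ball both terms are
uniformly small for `t ∈ [1/2, 1]` because `⟨z⟩^{2s} e^{-2H(z)} ≤ 2^{|2s|} ⟨tz⟩^{2s} e^{-2H(tz)}`.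
-/

open Complex in
theorem Complex.smul_eq_re_smul_add_im_smul {E : Type*} [AddCommGroup E] [Module ℂ E]
    (c : ℂ) (x : E) : c • x = c.re • x + c.im • (I • x) := by
  rw [← Complex.coe_smul, ← Complex.coe_smul, smul_smul, ← add_smul, re_add_im]

theorem LinearMap.differentiable_apply_self {𝕜 E : Type*} [NontriviallyNormedField 𝕜]
    [CompleteSpace 𝕜] [NormedAddCommGroup E] [NormedSpace 𝕜 E] [FiniteDimensional 𝕜 E]
    (B : E →ₗ[𝕜] E →ₗ[𝕜] 𝕜) : Differentiable 𝕜 fun z => B z z := by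
  let B' : E →L[𝕜] E →L[𝕜] 𝕜 :=
    LinearMap.toContinuousLinearMap (LinearMap.toContinuousLinearMap.toLinearMap ∘ₗ B)
  exact B'.differentiable.clm_apply differentiable_id

section HolomorphicPart

open Complex

variable {E : Type*} [AddCommGroup E] [Module ℂ E]

/-- `Re (B.holPart z z)` is the pluriharmonic part of the real quadratic form `z ↦ B z z`. -/
def LinearMap.holPart (B : E →ₗ[ℝ] E →ₗ[ℝ] ℝ) : E →ₗ[ℂ] E →ₗ[ℂ] ℂ :=
  LinearMap.mk₂ ℂ
    (fun z w => ⟨(B z w - B (I • z) (I • w)) / 2, -(B (I • z) w + B z (I • w)) / 2⟩)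
    (fun z₁ z₂ w => by apply Complex.ext <;> simp <;> ring)
    (fun c z w => by
      rw [smul_eq_re_smul_add_im_smul c z]
      apply Complex.ext <;> simp [smul_comm I (_ : ℝ) (_ : E), smul_smul] <;> ring)
    (fun z w₁ w₂ => by apply Complex.ext <;> simp <;> ring)
    (fun c z w => by
      rw [smul_eq_re_smul_add_im_smul c w]
      apply Complex.ext <;> simp [smul_comm I (_ : ℝ) (_ : E), smul_smul] <;> ring)

theorem LinearMap.re_holPart_apply_self (B : E →ₗ[ℝ] E →ₗ[ℝ] ℝ) (z : E) :
    (B.holPart z z).re = (B z z - B (I • z) (I • z)) / 2 := rfl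

end HolomorphicPart

theorem exists_le_mul_of_sq_homogeneous {E : Type*} [NormedAddCommGroup E] [NormedSpace ℝ E]
    [FiniteDimensional ℝ E] {P H : E → ℝ} (hP : Continuous P) (hH : Continuous H)
    (hPhom : ∀ (t : ℝ) z, P (t • z) = t ^ 2 * P z) (hHhom : ∀ (t : ℝ) z, H (t • z) = t ^ 2 * H z)
    (hHpos : ∀ z, z ≠ 0 → 0 < H z) : ∃ C, ∀ z, P z ≤ C * H z := by
  have hsphere : ∀ w ∈ Metric.sphere (0 : E) 1, w ≠ 0 := fun w hw =>
    ne_zero_of_norm_ne_zero (by simp [mem_sphere_zero_iff_norm.mp hw])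
  obtain ⟨C, hC⟩ := (isCompact_sphere (0 : E) 1).bddAbove_image
    (hP.continuousOn.div hH.continuousOn fun w hw => (hHpos w (hsphere w hw)).ne')
  refine ⟨C, fun z => ?_⟩
  rcases eq_or_ne z 0 with rfl | hz
  · have hP0 := hPhom 0 0
    have hH0 := hHhom 0 0
    simp only [zero_smul, ne_eq, OfNat.ofNat_ne_zero, not_false_eq_true, zero_pow,
      zero_mul] at hP0 hH0
    rw [hP0, hH0, mul_zero]
  set w := ‖z‖⁻¹ • z
  have hw : w ∈ Metric.sphere (0 : E) 1 := by simp [w, norm_smul, hz]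
  have hPw : P w ≤ C * H w :=
    (div_le_iff₀ (hHpos w (hsphere w hw))).mp (hC ⟨w, hw, rfl⟩)
  have hzw : z = ‖z‖ • w := by simp [w, smul_smul, hz]
  rw [hzw, hPhom, hHhom]
  nlinarith [sq_nonneg ‖z‖]

/-- The Levi form of a real quadratic form `Φ`, evaluated at `(z, z̄)` (see `IsSPSH`). -/
def leviForm {n : ℕ} (Φ : (Fin n → ℂ) → ℝ) (z : Fin n → ℂ) : ℝ := (Φ z + Φ (Complex.I • z)) / 2

namespace IsRQuad

variable {n : ℕ} {Φ : (Fin n → ℂ) → ℝ}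

theorem continuous (hΦ : IsRQuad Φ) : Continuous Φ := by
  obtain ⟨B, hB⟩ := hΦ
  rw [funext hB]
  exact B.differentiable_apply_self.continuous

theorem smul (hΦ : IsRQuad Φ) (t : ℝ) (z : Fin n → ℂ) : Φ (t • z) = t ^ 2 * Φ z := by
  obtain ⟨B, hB⟩ := hΦ
  simp only [hB, map_smul, LinearMap.smul_apply, smul_eq_mul]
  ring

theorem continuous_leviForm (hΦ : IsRQuad Φ) : Continuous (leviForm Φ) :=
  (hΦ.continuous.add (hΦ.continuous.comp (continuous_const_smul _))).div_const 2

theorem leviForm_smul (hΦ : IsRQuad Φ) (t : ℝ) (z : Fin n → ℂ) :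
    leviForm Φ (t • z) = t ^ 2 * leviForm Φ z := by
  simp only [leviForm, smul_comm Complex.I t z, hΦ.smul]
  ring

theorem exists_differentiable_re_eq_sub_leviForm (hΦ : IsRQuad Φ) :
    ∃ q : (Fin n → ℂ) → ℂ, Differentiable ℂ q ∧ ∀ z, (q z).re = Φ z - leviForm Φ z := by
  obtain ⟨B, hB⟩ := hΦ
  refine ⟨fun z => B.holPart z z, B.holPart.differentiable_apply_self, fun z => ?_⟩
  rw [B.re_holPart_apply_self, leviForm, hB, hB]
  ring

end IsRQuad

theorem IsSPSH.leviForm_pos {n : ℕ} {Φ : (Fin n → ℂ) → ℝ} (hΦ : IsSPSH Φ) {z : Fin n → ℂ}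
    (hz : z ≠ 0) : 0 < leviForm Φ z :=
  half_pos (hΦ.2 z hz)

theorem IsSPSH.leviForm_nonneg {n : ℕ} {Φ : (Fin n → ℂ) → ℝ} (hΦ : IsSPSH Φ) (z : Fin n → ℂ) :
    0 ≤ leviForm Φ z := by
  rcases eq_or_ne z 0 with rfl | hz
  · simpa using (hΦ.1.leviForm_smul 0 0).ge
  · exact (hΦ.leviForm_pos hz).le

theorem Real.rpow_le_rpow_mul_of_le_of_le {x y K : ℝ} (p : ℝ) (hy : 0 < y) (hyx : y ≤ x)
    (hxK : x ≤ K * y) : x ^ p ≤ K ^ |p| * y ^ p := by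
  have hK : 1 ≤ K := le_of_mul_le_mul_right (by linarith) hy
  rcases le_total 0 p with hp | hp
  · calc x ^ p ≤ (K * y) ^ p := Real.rpow_le_rpow (by linarith) hxK hp
      _ = K ^ |p| * y ^ p := by rw [abs_of_nonneg hp, Real.mul_rpow (by linarith) hy.le]
  · calc x ^ p ≤ y ^ p := Real.rpow_le_rpow_of_nonpos hy hyx hp
      _ ≤ K ^ |p| * y ^ p :=
        le_mul_of_one_le_left (by positivity) (Real.one_le_rpow hK (abs_nonneg p))

theorem Real.exists_one_add_rpow_mul_exp_neg_le {q a : ℝ} (hq : 0 < q) (ha : 0 < a) :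
    ∃ M, ∀ x, 0 ≤ x → (1 + x) ^ q * Real.exp (-(a * x)) ≤ M := by
  refine ⟨(1 + q / a) ^ q, fun x hx => ?_⟩
  have hlin : 1 + x ≤ (1 + q / a) * (1 + a * x / q) := by
    have hexpand : (1 + q / a) * (1 + a * x / q) = 1 + x + q / a + a * x / q := by
      field_simp
      ring
    linarith [div_pos hq ha, div_nonneg (mul_nonneg ha.le hx) hq.le]
  have hexp : (1 + a * x / q) ^ q ≤ Real.exp (a * x) := by
    calc (1 + a * x / q) ^ q ≤ Real.exp (a * x / q) ^ q :=
          Real.rpow_le_rpow (by positivity) (by linarith [Real.add_one_le_exp (a * x / q)]) hq.le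
      _ = Real.exp (a * x) := by rw [← Real.exp_mul, div_mul_cancel₀ _ hq.ne']
  calc (1 + x) ^ q * Real.exp (-(a * x))
      ≤ ((1 + q / a) ^ q * (1 + a * x / q) ^ q) * Real.exp (-(a * x)) := by
        rw [← Real.mul_rpow (by positivity) (by positivity)]
        gcongr
    _ ≤ ((1 + q / a) ^ q * Real.exp (a * x)) * Real.exp (-(a * x)) := by gcongr
    _ = (1 + q / a) ^ q := by rw [mul_assoc, ← Real.exp_add, add_neg_cancel, Real.exp_zero, mul_one]

section JapaneseBracket

variable {n : ℕ}

theorem eSq_nonneg (z : Fin n → ℂ) : 0 ≤ eSq z :=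
  Finset.sum_nonneg fun _ _ => Complex.normSq_nonneg _

theorem eSq_smul (t : ℝ) (z : Fin n → ℂ) : eSq (t • z) = t ^ 2 * eSq z := by
  simp only [eSq, Finset.mul_sum, Pi.smul_apply, Complex.real_smul, Complex.normSq_mul,
    Complex.normSq_ofReal, sq]

theorem continuous_eSq : Continuous (eSq (n := n)) :=
  continuous_finsetSum _ fun i _ => Complex.continuous_normSq.comp (continuous_apply i)

theorem jb_sq (z : Fin n → ℂ) : jb z ^ 2 = 1 + eSq z :=
  Real.sq_sqrt (by linarith [eSq_nonneg z])

theorem one_le_jb (z : Fin n → ℂ) : 1 ≤ jb z :=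
  Real.one_le_sqrt.mpr (by linarith [eSq_nonneg z])

theorem jb_pos (z : Fin n → ℂ) : 0 < jb z := one_pos.trans_le (one_le_jb z)

theorem continuous_jb : Continuous (jb (n := n)) :=
  Real.continuous_sqrt.comp (continuous_const.add continuous_eSq)

theorem jb_smul_le {t : ℝ} (ht : |t| ≤ 1) (z : Fin n → ℂ) : jb (t • z) ≤ jb z := by
  have : t ^ 2 ≤ 1 := by nlinarith [abs_nonneg t, sq_abs t]
  unfold jb
  gcongr
  rw [eSq_smul]
  nlinarith [eSq_nonneg z]

theorem jb_le_two_mul_jb_smul {t : ℝ} (ht : 1 / 2 ≤ t) (z : Fin n → ℂ) :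
    jb z ≤ 2 * jb (t • z) := by
  refine le_of_sq_le_sq ?_ (by linarith [jb_pos (t • z)])
  have : 1 / 4 ≤ t ^ 2 := by nlinarith
  rw [mul_pow, jb_sq, jb_sq, eSq_smul]
  nlinarith [eSq_nonneg z]

end JapaneseBracket

theorem MeasureTheory.lintegral_comp_smul {E : Type*} [NormedAddCommGroup E] [NormedSpace ℝ E]
    [MeasurableSpace E] [BorelSpace E] [FiniteDimensional ℝ E] (μ : Measure E)
    [μ.IsAddHaarMeasure] (g : E → ℝ≥0∞) {t : ℝ} (ht : t ≠ 0) :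
    ∫⁻ z, g (t • z) ∂μ = ENNReal.ofReal |(t ^ Module.finrank ℝ E)⁻¹| * ∫⁻ z, g z ∂μ := by
  rw [← smul_eq_mul, ← lintegral_smul_measure, ← Measure.map_addHaar_smul μ ht,
    ← MeasurableEquiv.coe_smul₀ ht, lintegral_map_equiv]
  rfl

theorem MeasureTheory.setLIntegral_compl_closedBall_comp_smul_le {E : Type*}
    [NormedAddCommGroup E] [NormedSpace ℝ E] [MeasurableSpace E] [BorelSpace E]
    [FiniteDimensional ℝ E] (μ : Measure E) [μ.IsAddHaarMeasure] (g : E → ℝ≥0∞) {t : ℝ}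
    (ht : 1 / 2 ≤ t) (R : ℝ) :
    ∫⁻ z in (Metric.closedBall 0 (2 * R))ᶜ, g (t • z) ∂μ
      ≤ 2 ^ Module.finrank ℝ E * ∫⁻ z in (Metric.closedBall 0 R)ᶜ, g z ∂μ := by
  have ht0 : 0 < t := by linarith
  rw [← lintegral_indicator measurableSet_closedBall.compl,
    ← lintegral_indicator measurableSet_closedBall.compl]
  calc ∫⁻ z, (Metric.closedBall 0 (2 * R))ᶜ.indicator (fun z => g (t • z)) z ∂μ
      ≤ ∫⁻ z, (Metric.closedBall 0 R)ᶜ.indicator g (t • z) ∂μ := by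
        refine lintegral_mono (Set.indicator_le fun z hz => ?_)
        have hz' : 2 * R < ‖z‖ := by simpa using hz
        rw [Set.indicator_of_mem]
        simp only [Set.mem_compl_iff, mem_closedBall_zero_iff, not_le, norm_smul,
          Real.norm_of_nonneg ht0.le]
        nlinarith [norm_nonneg z]
    _ = ENNReal.ofReal |(t ^ Module.finrank ℝ E)⁻¹| *
          ∫⁻ z, (Metric.closedBall 0 R)ᶜ.indicator g z ∂μ :=
        lintegral_comp_smul μ _ ht0.ne'
    _ ≤ 2 ^ Module.finrank ℝ E * ∫⁻ z, (Metric.closedBall 0 R)ᶜ.indicator g z ∂μ := by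
        gcongr
        rw [abs_of_pos (by positivity), ← inv_pow, ENNReal.ofReal_pow (by positivity)]
        gcongr
        rw [ENNReal.ofReal_le_iff_le_toReal (by norm_num)]
        simpa using inv_le_of_inv_le₀ (by norm_num) (by linarith : 2⁻¹ ≤ t)

open Filter Topology in
theorem MeasureTheory.tendsto_setLIntegral_compl_closedBall {E : Type*} [PseudoMetricSpace E]
    [MeasurableSpace E] [OpensMeasurableSpace E] {μ : Measure E} {g : E → ℝ≥0∞}
    (hg : AEMeasurable g μ) (hfin : ∫⁻ z, g z ∂μ ≠ ⊤) (x : E) :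
    Tendsto (fun R : ℝ => ∫⁻ z in (Metric.closedBall x R)ᶜ, g z ∂μ) atTop (𝓝 0) := by
  have hlim := tendsto_lintegral_filter_of_dominated_convergence' (l := atTop) (μ := μ)
    (F := fun R z => (Metric.closedBall x R)ᶜ.indicator g z) (f := 0) g
    (.of_forall fun _ => hg.indicator measurableSet_closedBall.compl)
    (.of_forall fun _ => ae_of_all _ (Set.indicator_le_self' fun _ _ => zero_le)) hfin
    (ae_of_all _ fun z => tendsto_const_nhds.congr' <|
      (eventually_ge_atTop (dist z x)).mono fun R hR =>
        (Set.indicator_of_notMem (by simpa using hR) g).symm)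
  simpa [lintegral_indicator measurableSet_closedBall.compl] using hlim

def hweight {n : ℕ} (Φ : (Fin n → ℂ) → ℝ) (s : ℝ) (z : Fin n → ℂ) : ℝ :=
  jb z ^ (2 * s) * Real.exp (-2 * Φ z)

section Weight

variable {n : ℕ} {H : (Fin n → ℂ) → ℝ}

theorem hweight_pos (Φ : (Fin n → ℂ) → ℝ) (s : ℝ) (z : Fin n → ℂ) : 0 < hweight Φ s z :=
  mul_pos (Real.rpow_pos_of_pos (jb_pos z) _) (Real.exp_pos _)

theorem continuous_hweight {Φ : (Fin n → ℂ) → ℝ} (hΦ : Continuous Φ) (s : ℝ) :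
    Continuous (hweight Φ s) :=
  (continuous_jb.rpow_const fun z => Or.inl (jb_pos z).ne').mul
    (Real.continuous_exp.comp (continuous_const.mul hΦ))

theorem hnorm_eq_lintegral_hweight (Φ : (Fin n → ℂ) → ℝ) (s : ℝ) (u : (Fin n → ℂ) → ℂ) :
    hnorm Φ s u = ∫⁻ z, ENNReal.ofReal (‖u z‖ ^ 2 * hweight Φ s z) := by
  refine lintegral_congr fun z => ?_
  rw [ENNReal.ofReal_mul (sq_nonneg _), ENNReal.ofReal_pow (norm_nonneg _), ofReal_norm,
    enorm_eq_nnnorm, hweight]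

theorem hnorm_exp_mul {Φ : (Fin n → ℂ) → ℝ} {q : (Fin n → ℂ) → ℂ}
    (hq : ∀ z, (q z).re = Φ z - H z) (s : ℝ) (f : (Fin n → ℂ) → ℂ) :
    hnorm Φ s (fun z => Complex.exp (q z) * f z) = hnorm H s f := by
  simp only [hnorm_eq_lintegral_hweight]
  refine lintegral_congr fun z => congrArg ENNReal.ofReal ?_
  have hexp : Real.exp (Φ z - H z) ^ 2 * Real.exp (-2 * Φ z) = Real.exp (-2 * H z) := by
    rw [← Real.exp_nat_mul, ← Real.exp_add]
    congr 1
    push_cast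
    ring
  rw [norm_mul, Complex.norm_exp, hq, hweight, hweight, ← hexp]
  ring

end Weight

section Dilation

open Filter Topology

variable {n : ℕ} {H : (Fin n → ℂ) → ℝ} {f : (Fin n → ℂ) → ℂ}

theorem exists_jb_rpow_mul_exp_le {C : ℝ} (hC : ∀ z, eSq z ≤ C * H z) (hH0 : ∀ z, 0 ≤ H z)
    (p : ℝ) {b : ℝ} (hb : 0 < b) : ∃ M, ∀ z : Fin n → ℂ, jb z ^ p * Real.exp (-(b * H z)) ≤ M := by
  set q := max (p / 2) 1
  have hq : 0 < q := one_pos.trans_le (le_max_right _ _)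
  obtain ⟨M, hM⟩ := Real.exists_one_add_rpow_mul_exp_neg_le hq hb
  refine ⟨(1 + |C|) ^ q * M, fun z => ?_⟩
  have hjb : jb z ^ p ≤ (1 + |C|) ^ q * (1 + H z) ^ q := calc
    jb z ^ p ≤ jb z ^ (2 * q) :=
        Real.rpow_le_rpow_of_exponent_le (one_le_jb z) (by linarith [le_max_left (p / 2) 1])
    _ = (1 + eSq z) ^ q := by
        rw [Real.rpow_mul (jb_pos z).le, Real.rpow_two, jb_sq]
    _ ≤ ((1 + |C|) * (1 + H z)) ^ q := by
        refine Real.rpow_le_rpow (by linarith [eSq_nonneg z]) ?_ hq.le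
        nlinarith [hC z, hH0 z, le_abs_self C, abs_nonneg C]
    _ = (1 + |C|) ^ q * (1 + H z) ^ q := Real.mul_rpow (by positivity) (by linarith [hH0 z])
  calc jb z ^ p * Real.exp (-(b * H z))
      ≤ (1 + |C|) ^ q * (1 + H z) ^ q * Real.exp (-(b * H z)) := by gcongr
    _ ≤ (1 + |C|) ^ q * M := by
        rw [mul_assoc]
        exact mul_le_mul_of_nonneg_left (hM _ (hH0 z)) (by positivity)

theorem hweight_le_two_rpow_mul_hweight_smul (hH0 : ∀ z, 0 ≤ H z)
    (hHhom : ∀ (t : ℝ) z, H (t • z) = t ^ 2 * H z) {t : ℝ} (ht : 1 / 2 ≤ t) (ht1 : t ≤ 1) (s : ℝ)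
    (z : Fin n → ℂ) : hweight H s z ≤ 2 ^ |2 * s| * hweight H s (t • z) := by
  have hjb : jb z ^ (2 * s) ≤ 2 ^ |2 * s| * jb (t • z) ^ (2 * s) :=
    Real.rpow_le_rpow_mul_of_le_of_le _ (jb_pos _)
      (jb_smul_le (abs_le.mpr ⟨by linarith, ht1⟩) z) (jb_le_two_mul_jb_smul ht z)
  have hexp : Real.exp (-2 * H z) ≤ Real.exp (-2 * H (t • z)) := by
    have ht2 : t ^ 2 ≤ 1 := by nlinarith
    rw [Real.exp_le_exp, hHhom]
    nlinarith [mul_le_mul_of_nonneg_right ht2 (hH0 z)]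
  calc hweight H s z ≤ (2 ^ |2 * s| * jb (t • z) ^ (2 * s)) * Real.exp (-2 * H (t • z)) :=
        mul_le_mul hjb hexp (Real.exp_nonneg _)
          (mul_nonneg (by positivity) (Real.rpow_nonneg (jb_pos _).le _))
    _ = 2 ^ |2 * s| * hweight H s (t • z) := by rw [hweight, mul_assoc]

theorem exists_hweight_le_mul_hweight_smul (hH0 : ∀ z, 0 ≤ H z)
    (hHhom : ∀ (t : ℝ) z, H (t • z) = t ^ 2 * H z) {C : ℝ} (hC : ∀ z, eSq z ≤ C * H z) {t : ℝ}
    (ht : |t| < 1) (r s : ℝ) : ∃ M, ∀ z, hweight H r z ≤ M * hweight H s (t • z) := by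
  have hb : 0 < 2 * (1 - t ^ 2) := by nlinarith [abs_nonneg t, sq_abs t]
  obtain ⟨M, hM⟩ := exists_jb_rpow_mul_exp_le hC hH0 (2 * r + |2 * s|) hb
  refine ⟨M, fun z => ?_⟩
  have hsplit : hweight H r z = (jb z ^ (2 * r + |2 * s|) * Real.exp (-(2 * (1 - t ^ 2) * H z)))
      * (jb z ^ (-|2 * s|) * Real.exp (-2 * H (t • z))) := by
    have hjb0 : jb z ^ |2 * s| ≠ 0 := (Real.rpow_pos_of_pos (jb_pos z) _).ne'
    rw [hweight, hHhom, Real.rpow_add (jb_pos z), Real.rpow_neg (jb_pos z).le,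
      show -2 * H z = -(2 * (1 - t ^ 2) * H z) + -2 * (t ^ 2 * H z) by ring, Real.exp_add]
    field_simp
  have hjb : jb z ^ (-|2 * s|) ≤ jb (t • z) ^ (2 * s) := calc
    jb z ^ (-|2 * s|) ≤ jb (t • z) ^ (-|2 * s|) :=
        Real.rpow_le_rpow_of_nonpos (jb_pos _) (jb_smul_le ht.le z) (neg_nonpos.mpr (abs_nonneg _))
    _ ≤ jb (t • z) ^ (2 * s) := Real.rpow_le_rpow_of_exponent_le (one_le_jb _) (neg_abs_le _)
  have hA : 0 ≤ jb z ^ (2 * r + |2 * s|) * Real.exp (-(2 * (1 - t ^ 2) * H z)) :=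
    mul_nonneg (Real.rpow_nonneg (jb_pos z).le _) (Real.exp_nonneg _)
  rw [hsplit, hweight]
  exact mul_le_mul (hM z) (mul_le_mul_of_nonneg_right hjb (Real.exp_nonneg _))
    (mul_nonneg (Real.rpow_nonneg (jb_pos z).le _) (Real.exp_nonneg _)) (hA.trans (hM z))

theorem hnorm_comp_smul_lt_top (hH0 : ∀ z, 0 ≤ H z)
    (hHhom : ∀ (t : ℝ) z, H (t • z) = t ^ 2 * H z) {C : ℝ} (hC : ∀ z, eSq z ≤ C * H z) {s : ℝ}
    (hf : hnorm H s f ≠ ⊤) {t : ℝ} (ht0 : t ≠ 0) (ht : |t| < 1) (r : ℝ) :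
    hnorm H r (fun z => f (t • z)) < ⊤ := by
  obtain ⟨M, hM⟩ := exists_hweight_le_mul_hweight_smul hH0 hHhom hC ht r s
  calc hnorm H r (fun z => f (t • z))
      ≤ ∫⁻ z, ENNReal.ofReal M * ENNReal.ofReal (‖f (t • z)‖ ^ 2 * hweight H s (t • z)) := by
        rw [hnorm_eq_lintegral_hweight]
        refine lintegral_mono fun z => ?_
        rw [← ENNReal.ofReal_mul' (by positivity [hweight_pos H s (t • z)])]
        refine ENNReal.ofReal_le_ofReal ?_
        nlinarith [hM z, sq_nonneg ‖f (t • z)‖]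
    _ = ENNReal.ofReal M *
          (ENNReal.ofReal |(t ^ Module.finrank ℝ (Fin n → ℂ))⁻¹| * hnorm H s f) := by
        rw [lintegral_const_mul' _ _ ENNReal.ofReal_ne_top, hnorm_eq_lintegral_hweight,
          lintegral_comp_smul volume (fun z => ENNReal.ofReal (‖f z‖ ^ 2 * hweight H s z)) ht0]
    _ < ⊤ := by finiteness

theorem tendsto_setLIntegral_closedBall_sub_comp_smul (hH : Continuous H) (hf : Continuous f)
    (s R : ℝ) :
    Tendsto (fun t : ℝ => ∫⁻ z in Metric.closedBall 0 R,
      ENNReal.ofReal (‖f z - f (t • z)‖ ^ 2 * hweight H s z)) (𝓝[<] 1) (𝓝 0) := by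
  set B := Metric.closedBall (0 : Fin n → ℂ) R
  set G : ℝ → (Fin n → ℂ) → ℝ := fun t z => ‖f z - f (t • z)‖ ^ 2 * hweight H s z
  have hG : Continuous fun p : ℝ × (Fin n → ℂ) => G p.1 p.2 :=
    (((hf.comp continuous_snd).sub (hf.comp (continuous_fst.smul continuous_snd))).norm.pow 2).mul
      ((continuous_hweight hH s).comp continuous_snd)
  obtain ⟨M, hM⟩ := (isCompact_closedBall (0 : Fin n → ℂ) R).exists_bound_of_continuousOn
    hf.continuousOn
  obtain ⟨W, hW⟩ := (isCompact_closedBall (0 : Fin n → ℂ) R).exists_bound_of_continuousOn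
    (continuous_hweight hH s).continuousOn
  have hbound : ∀ t ∈ Set.Ioo (0 : ℝ) 1, ∀ z ∈ B,
      ENNReal.ofReal (G t z) ≤ ENNReal.ofReal ((2 * M) ^ 2 * W) := by
    intro t ht z hz
    have htz : t • z ∈ B := by
      simpa [B, norm_smul, abs_of_pos ht.1] using
        (mul_le_of_le_one_left (norm_nonneg z) ht.2.le).trans (mem_closedBall_zero_iff.mp hz)
    have hdiff : ‖f z - f (t • z)‖ ≤ 2 * M := by
      linarith [norm_sub_le (f z) (f (t • z)), hM z hz, hM _ htz]
    exact ENNReal.ofReal_le_ofReal (mul_le_mul (pow_le_pow_left₀ (norm_nonneg _) hdiff 2)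
      ((Real.le_norm_self _).trans (hW z hz)) (hweight_pos H s z).le (sq_nonneg _))
  have hfin : ∫⁻ _ in B, ENNReal.ofReal ((2 * M) ^ 2 * W) ≠ ⊤ := by
    rw [setLIntegral_const]
    exact ENNReal.mul_ne_top ENNReal.ofReal_ne_top measure_closedBall_lt_top.ne
  have hpointwise : ∀ z, Tendsto (fun t => ENNReal.ofReal (G t z)) (𝓝[<] 1) (𝓝 0) := fun z => by
    have hcont : Continuous fun t => ENNReal.ofReal (G t z) :=
      ENNReal.continuous_ofReal.comp (hG.comp (continuous_id.prodMk continuous_const))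
    simpa [G] using (hcont.tendsto 1).mono_left nhdsWithin_le_nhds
  show Tendsto (fun t => ∫⁻ z in B, ENNReal.ofReal (G t z)) _ _
  simpa only [Pi.zero_apply, lintegral_zero] using
    tendsto_lintegral_filter_of_dominated_convergence (μ := volume.restrict B)
    (F := fun t z => ENNReal.ofReal (G t z)) (f := 0)
    (fun _ => ENNReal.ofReal ((2 * M) ^ 2 * W))
    (.of_forall fun t => ENNReal.measurable_ofReal.comp
      (hG.comp (continuous_const.prodMk continuous_id)).measurable)
    (mem_of_superset (Ioo_mem_nhdsLT zero_lt_one) fun t ht =>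
      ae_restrict_of_forall_mem measurableSet_closedBall (hbound t ht))
    hfin (ae_of_all _ hpointwise)

theorem ofReal_norm_sub_comp_smul_sq_mul_hweight_le (hH0 : ∀ z, 0 ≤ H z)
    (hHhom : ∀ (t : ℝ) z, H (t • z) = t ^ 2 * H z) {t : ℝ} (ht : 1 / 2 ≤ t) (ht1 : t ≤ 1)
    (s : ℝ) (z : Fin n → ℂ) :
    ENNReal.ofReal (‖f z - f (t • z)‖ ^ 2 * hweight H s z)
      ≤ 2 * ENNReal.ofReal (‖f z‖ ^ 2 * hweight H s z) + 2 * ENNReal.ofReal (2 ^ |2 * s|) *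
        ENNReal.ofReal (‖f (t • z)‖ ^ 2 * hweight H s (t • z)) := by
  have hsq : ‖f z - f (t • z)‖ ^ 2 ≤ 2 * ‖f z‖ ^ 2 + 2 * ‖f (t • z)‖ ^ 2 := by
    nlinarith [norm_sub_le (f z) (f (t • z)), norm_nonneg (f z - f (t • z)),
      sq_nonneg (‖f z‖ - ‖f (t • z)‖)]
  have hw := hweight_le_two_rpow_mul_hweight_smul hH0 hHhom ht ht1 s z
  have hK : (0 : ℝ) ≤ 2 ^ |2 * s| := Real.rpow_nonneg zero_le_two _
  calc ENNReal.ofReal (‖f z - f (t • z)‖ ^ 2 * hweight H s z)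
      ≤ ENNReal.ofReal (2 * (‖f z‖ ^ 2 * hweight H s z)
          + 2 * 2 ^ |2 * s| * (‖f (t • z)‖ ^ 2 * hweight H s (t • z))) := by
        refine ENNReal.ofReal_le_ofReal ?_
        nlinarith [mul_le_mul_of_nonneg_right hsq (hweight_pos H s z).le,
          mul_le_mul_of_nonneg_left hw (sq_nonneg ‖f (t • z)‖)]
    _ = _ := by
        rw [ENNReal.ofReal_add (by positivity [hweight_pos H s z])
            (by positivity [hweight_pos H s (t • z)]),
          ENNReal.ofReal_mul (p := 2) zero_le_two, ENNReal.ofReal_mul (p := 2 * 2 ^ |2 * s|)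
            (by positivity), ENNReal.ofReal_mul (p := 2) zero_le_two, ENNReal.ofReal_ofNat]

theorem setLIntegral_compl_closedBall_sub_comp_smul_le (hH : Continuous H) (hf : Continuous f)
    (hH0 : ∀ z, 0 ≤ H z) (hHhom : ∀ (t : ℝ) z, H (t • z) = t ^ 2 * H z) {t : ℝ}
    (ht : 1 / 2 ≤ t) (ht1 : t ≤ 1) (s R : ℝ) :
    ∫⁻ z in (Metric.closedBall 0 (2 * R))ᶜ, ENNReal.ofReal (‖f z - f (t • z)‖ ^ 2 * hweight H s z)
      ≤ (2 + 2 * ENNReal.ofReal (2 ^ |2 * s|) * 2 ^ Module.finrank ℝ (Fin n → ℂ)) *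
        ∫⁻ z in (Metric.closedBall 0 R)ᶜ, ENNReal.ofReal (‖f z‖ ^ 2 * hweight H s z) := by
  set F : (Fin n → ℂ) → ℝ≥0∞ := fun z => ENNReal.ofReal (‖f z‖ ^ 2 * hweight H s z)
  set K : ℝ≥0∞ := ENNReal.ofReal (2 ^ |2 * s|)
  have hFmeas : Measurable F :=
    ENNReal.measurable_ofReal.comp ((hf.norm.pow 2).mul (continuous_hweight hH s)).measurable
  have hmono : ∫⁻ z in (Metric.closedBall 0 (2 * R))ᶜ, F z
      ≤ ∫⁻ z in (Metric.closedBall 0 R)ᶜ, F z :=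
    lintegral_mono_set fun z hz => by
      simp only [Set.mem_compl_iff, mem_closedBall_zero_iff, not_le] at hz ⊢
      linarith [norm_nonneg z]
  calc _ ≤ ∫⁻ z in (Metric.closedBall 0 (2 * R))ᶜ, (2 * F z + 2 * K * F (t • z)) :=
        lintegral_mono fun z => ofReal_norm_sub_comp_smul_sq_mul_hweight_le hH0 hHhom ht ht1 s z
    _ = 2 * (∫⁻ z in (Metric.closedBall 0 (2 * R))ᶜ, F z)
          + 2 * K * ∫⁻ z in (Metric.closedBall 0 (2 * R))ᶜ, F (t • z) := by
        rw [lintegral_add_left (hFmeas.const_mul 2), lintegral_const_mul 2 hFmeas,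
          lintegral_const_mul' _ _ (by finiteness)]
    _ ≤ 2 * (∫⁻ z in (Metric.closedBall 0 R)ᶜ, F z) + 2 * K *
          (2 ^ Module.finrank ℝ (Fin n → ℂ) * ∫⁻ z in (Metric.closedBall 0 R)ᶜ, F z) := by
        gcongr
        exact setLIntegral_compl_closedBall_comp_smul_le volume F ht R
    _ = _ := by ring

theorem tendsto_hnorm_sub_comp_smul (hH : Continuous H) (hf : Continuous f)
    (hH0 : ∀ z, 0 ≤ H z) (hHhom : ∀ (t : ℝ) z, H (t • z) = t ^ 2 * H z) {s : ℝ}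
    (hfs : hnorm H s f ≠ ⊤) :
    Tendsto (fun t : ℝ => hnorm H s (f - fun z => f (t • z))) (𝓝[<] 1) (𝓝 0) := by
  set K : ℝ≥0∞ := 2 + 2 * ENNReal.ofReal (2 ^ |2 * s|) * 2 ^ Module.finrank ℝ (Fin n → ℂ)
  have htail : Tendsto (fun R : ℝ => K * ∫⁻ z in (Metric.closedBall 0 R)ᶜ,
      ENNReal.ofReal (‖f z‖ ^ 2 * hweight H s z)) atTop (𝓝 0) := by
    rw [hnorm_eq_lintegral_hweight] at hfs
    simpa using ENNReal.Tendsto.const_mul (tendsto_setLIntegral_compl_closedBall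
      (ENNReal.measurable_ofReal.comp ((hf.norm.pow 2).mul (continuous_hweight hH s)).measurable
        ).aemeasurable hfs 0) (Or.inr (by finiteness))
  rw [ENNReal.tendsto_nhds_zero]
  intro δ hδ
  obtain ⟨R, hR⟩ := (ENNReal.tendsto_nhds_zero.mp htail (δ / 2)
    (ENNReal.half_pos hδ.ne')).exists
  filter_upwards [ENNReal.tendsto_nhds_zero.mp
      (tendsto_setLIntegral_closedBall_sub_comp_smul hH hf s (2 * R)) (δ / 2)
      (ENNReal.half_pos hδ.ne'), Ioo_mem_nhdsLT (by norm_num : (1 / 2 : ℝ) < 1)]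
    with t hinner ht
  rw [hnorm_eq_lintegral_hweight, ← lintegral_add_compl _ (measurableSet_closedBall
    (x := 0) (ε := 2 * R))]
  calc _ ≤ δ / 2 + δ / 2 := add_le_add hinner <|
        (setLIntegral_compl_closedBall_sub_comp_smul_le hH hf hH0 hHhom ht.1.le ht.2.le s R).trans hR
    _ = δ := ENNReal.add_halves δ

end Dilation

theorem stmt_5_general (n : ℕ) (Φ : (Fin n → ℂ) → ℝ) (hΦ : IsSPSH Φ) (s : ℝ)
    (u : (Fin n → ℂ) → ℂ) (hu : Differentiable ℂ u) (hus : hnorm Φ s u < ⊤)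
    (ε : ℝ) (hε : 0 < ε) :
    ∃ v : (Fin n → ℂ) → ℂ, Differentiable ℂ v ∧ (∀ r : ℝ, hnorm Φ r v < ⊤) ∧
      hnorm Φ s (u - v) < ENNReal.ofReal (ε ^ 2) := by
  obtain ⟨q, hq, hqre⟩ := hΦ.1.exists_differentiable_re_eq_sub_leviForm
  obtain ⟨C, hC⟩ := exists_le_mul_of_sq_homogeneous continuous_eSq hΦ.1.continuous_leviForm
    eSq_smul hΦ.1.leviForm_smul fun z => hΦ.leviForm_pos
  set f := fun z => Complex.exp (-q z) * u z
  have hf : Differentiable ℂ f := hq.neg.cexp.mul hu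
  have hfs : hnorm (leviForm Φ) s f ≠ ⊤ := by
    rw [← hnorm_exp_mul hqre]
    simpa [f, ← mul_assoc, ← Complex.exp_add] using hus.ne
  obtain ⟨t, hlt, ht⟩ := ((tendsto_hnorm_sub_comp_smul hΦ.1.continuous_leviForm hf.continuous
    hΦ.leviForm_nonneg hΦ.1.leviForm_smul hfs).eventually
    (gt_mem_nhds (ENNReal.ofReal_pos.mpr (pow_pos hε 2)))).and
    (Ioo_mem_nhdsLT zero_lt_one) |>.exists
  refine ⟨fun z => Complex.exp (q z) * f (t • z),
    hq.cexp.mul (hf.comp (differentiable_id.const_smul t)), fun r => ?_, ?_⟩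
  · rw [hnorm_exp_mul hqre]
    exact hnorm_comp_smul_lt_top hΦ.leviForm_nonneg hΦ.1.leviForm_smul hC hfs ht.1.ne'
      (abs_lt.mpr ⟨by linarith [ht.1], ht.2⟩) r
  · convert hlt using 1
    rw [← hnorm_exp_mul hqre]
    congr 1
    ext z
    simp [f, mul_sub, ← mul_assoc, ← Complex.exp_add]

/-- For a strictly plurisubharmonic quadratic form `Φ` on `ℂⁿ` and every
`s ∈ ℝ`, the space `H^∞_Φ(ℂⁿ) = ⋂_r H^r_Φ(ℂⁿ)` is dense in `H^s_Φ(ℂⁿ)` for the norm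
`‖·‖_s`: for every `u ∈ H^s_Φ` and `ε > 0` there is `v ∈ H^∞_Φ` with `‖u − v‖_s < ε`
(equivalently `‖u − v‖_s² < ε²`). -/
theorem stmt_5 (n : ℕ) (hn : 1 ≤ n) (Φ : (Fin n → ℂ) → ℝ) (hΦ : IsSPSH Φ) (s : ℝ)
    (u : (Fin n → ℂ) → ℂ) (hu : Differentiable ℂ u) (hus : hnorm Φ s u < ⊤)
    (ε : ℝ) (hε : 0 < ε) :
    ∃ v : (Fin n → ℂ) → ℂ, Differentiable ℂ v ∧ (∀ r : ℝ, hnorm Φ r v < ⊤) ∧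
      hnorm Φ s (u - v) < ENNReal.ofReal (ε ^ 2) :=
  stmt_5_general n Φ hΦ s u hu hus ε hε
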